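/- arXiv:1712.07932 — 2 statements merged into one kernel-verified Lean document; each statement's English description precedes it below -/
import Mathlib

section
/- Let f_k(x) be defined by f_0 = 1, f_1 = x, f_{k+2} = x·f_{k+1} − f_k, and define p_{2k}(x) = f_k(x)² and p_{2k+1}(x) = f_k(x)·f_{k+1}(x). Then the generating function ∑_{j≥0} p_j(x)·χ^j equals 1/((1 − χ²)(1 − xχ + χ²)) as a formal power series in χ over ℚ[x]. -/
/-!
The `f k` are the polynomials `Polynomial.Chebyshev.S ℚ k`. Multiplying the series by
`1 - xχ + χ²` gives `∑_k χ^(2k)`: the even coefficients are `S k² + S (k+1)² - x S k S (k+1)`,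
which is the Cassini-type invariant `1`, and the odd ones are `S (k+1)` times
`S (k+2) - x S (k+1) + S k = 0`. Finally `∑_k χ^(2k) · (1 - χ²) = 1`.
-/

open Polynomial.Chebyshev PowerSeries

variable {R : Type*} [CommRing R]

theorem Polynomial.Chebyshev.eq_S_of_recurrence {f : ℕ → Polynomial R}
    (h0 : f 0 = 1) (h1 : f 1 = Polynomial.X)
    (hrec : ∀ k, f (k + 2) = Polynomial.X * f (k + 1) - f k) :
    ∀ k : ℕ, f k = S R k
  | 0 => by simp [h0]
  | 1 => by simp [h1]
  | k + 2 => by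
    rw [hrec, eq_S_of_recurrence h0 h1 hrec k, eq_S_of_recurrence h0 h1 hrec (k + 1)]
    push_cast
    exact (S_add_two R k).symm

theorem PowerSeries.mk_even_indicator_mul_one_sub_X_sq :
    mk (fun n => if Even n then (1 : R) else 0) * (1 - X ^ 2) = 1 := by
  ext n
  rcases n with _ | _ | n <;>
    simp [mul_sub, coeff_mul_X_pow', coeff_one, Nat.even_add_one]

theorem PowerSeries.coeff_add_two_mul_one_sub_C_mul_X_add_X_sq (q : PowerSeries R) (a : R)
    (n : ℕ) :
    coeff (n + 2) (q * (1 - C a * X + X ^ 2)) =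
      coeff (n + 2) q - a * coeff (n + 1) q + coeff n q := by
  rw [show q * (1 - C a * X + X ^ 2) = q - C a * (q * X) + q * X ^ 2 by ring]
  simp only [map_add, map_sub, coeff_C_mul, coeff_succ_mul_X, coeff_mul_X_pow]

theorem PowerSeries.mk_mul_one_sub_C_X_mul_X_add_X_sq_of_S {p : ℕ → Polynomial R}
    (hpe : ∀ k : ℕ, p (2 * k) = S R k ^ 2)
    (hpo : ∀ k : ℕ, p (2 * k + 1) = S R k * S R (k + 1)) :
    mk p * (1 - C Polynomial.X * X + X ^ 2) = mk (fun n => if Even n then 1 else 0) := by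
  have hp0 : p 0 = 1 := by simpa using hpe 0
  have hp1 : p 1 = Polynomial.X := by simpa using hpo 0
  refine PowerSeries.ext fun n => ?_
  obtain _ | _ | n := n
  · simp [hp0]
  · simp [mul_add, mul_sub, ← mul_assoc, coeff_mul_X_pow', hp0, hp1]
  rw [coeff_add_two_mul_one_sub_C_mul_X_add_X_sq]
  simp only [coeff_mk]
  obtain ⟨k, rfl | rfl⟩ := Nat.even_or_odd' n
  · rw [show 2 * k + 2 = 2 * (k + 1) by ring, hpe, hpo, hpe, if_pos (even_two_mul _)]
    push_cast
    linear_combination (norm := ring_nf) S_sq_add_S_sq R k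
  · rw [show 2 * k + 1 + 2 = 2 * (k + 1) + 1 by ring, show 2 * k + 1 + 1 = 2 * (k + 1) by ring,
      hpe, hpo, hpo, if_neg (by simp)]
    push_cast
    linear_combination (norm := ring_nf) S R (k + 1) * S_add_two R k

/-- With `f k` the modified Fibonacci polynomials (`f 0 = 1`, `f 1 = X`,
`f (k+2) = X·f (k+1) − f k`), set `p (2k) = (f k)²` and `p (2k+1) = f k · f (k+1)`.
Then `∑_{j≥0} p j · χ^j = 1/((1 − χ²)(1 − xχ + χ²))` as formal power series in `χ`
over `ℚ[x]`, i.e. the product of the series with the denominator equals `1`. -/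
theorem stmt_1 (f : ℕ → Polynomial ℚ)
    (h0 : f 0 = 1) (h1 : f 1 = Polynomial.X)
    (hrec : ∀ k, f (k + 2) = Polynomial.X * f (k + 1) - f k)
    (p : ℕ → Polynomial ℚ)
    (hpe : ∀ k, p (2 * k) = (f k) ^ 2)
    (hpo : ∀ k, p (2 * k + 1) = f k * f (k + 1)) :
    (PowerSeries.mk p) *
      ((1 - PowerSeries.X ^ 2) *
        (1 - PowerSeries.C (R := Polynomial ℚ) Polynomial.X * PowerSeries.X
          + PowerSeries.X ^ 2)) = 1 := by
  have hf := eq_S_of_recurrence h0 h1 hrec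
  have hpe' : ∀ k : ℕ, p (2 * k) = S ℚ k ^ 2 := fun k => by rw [hpe, hf]
  have hpo' : ∀ k : ℕ, p (2 * k + 1) = S ℚ k * S ℚ (k + 1) := fun k => by
    rw [hpo, hf, hf, Nat.cast_succ]
  rw [mul_comm (1 - X ^ 2), ← mul_assoc, mk_mul_one_sub_C_X_mul_X_add_X_sq_of_S hpe' hpo',
    mk_even_indicator_mul_one_sub_X_sq]
end

section
/- For the power series c(x,χ) = 1/((1−χ²)(1−xχ+χ²)) = ∑_{i,j≥0} c_{ij} x^i χ^j, the coefficient c_{ij} vanishes if j − i is odd or if i > j, and c_{i,i+2k} = ∑_{p=0}^{k} (−1)^p · binom(i+p, i). -/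
/-! The series `1/(1 - xχ + χ²)` is the generating function `∑ Sₙ(x) χⁿ` of the rescaled
Chebyshev polynomials `S_{n+2} = x S_{n+1} - Sₙ`. By this recurrence `Sₙ` only has monomials
`xⁱ` with `i ≤ n`, `i ≡ n [MOD 2]`, and the coefficient of `xⁱ` in `S_{i+2l}` is
`(-1)ˡ binom(i+l, i)` (Pascal's rule). Multiplying by `1/(1 - χ²)` gives
`c_j = S_j + S_{j-2} + S_{j-4} + ⋯`, so `c_{i,i+2k} = ∑_{l ≤ k} (-1)ˡ binom(i+l, i)`. -/

namespace Polynomial.Chebyshev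

variable {R : Type*} [CommRing R]

theorem coeff_zero_S_natCast_add_two (n : ℕ) :
    (S R ↑(n + 2)).coeff 0 = -(S R n).coeff 0 := by
  push_cast
  simp [S_add_two]

theorem coeff_succ_S_natCast_add_two (n i : ℕ) :
    (S R ↑(n + 2)).coeff (i + 1) = (S R ↑(n + 1)).coeff i - (S R n).coeff (i + 1) := by
  push_cast
  simp [S_add_two, coeff_X_mul]

theorem coeff_S_eq_zero_of_odd_or_lt {n i : ℕ} (h : Odd (i + n) ∨ n < i) :
    (S R n).coeff i = 0 := by
  induction n using Nat.strong_induction_on generalizing i with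
  | _ n ih =>
  match n, i with
  | 0, i =>
    have hi : i ≠ 0 := by rintro rfl; simp at h
    simp [coeff_one, hi]
  | 1, i =>
    have hi : i ≠ 1 := by rintro rfl; simp [Nat.odd_iff] at h
    simp [coeff_X, Ne.symm hi]
  | n + 2, 0 =>
    simp only [Nat.odd_iff] at h ih
    rw [coeff_zero_S_natCast_add_two, ih n (by omega) (by omega), neg_zero]
  | n + 2, i + 1 =>
    simp only [Nat.odd_iff] at h ih
    rw [coeff_succ_S_natCast_add_two, ih (n + 1) (by omega) (by omega), ih n (by omega) (by omega),
      sub_zero]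

theorem coeff_S_self (n : ℕ) : (S R n).coeff n = 1 := by
  induction n using Nat.twoStepInduction with
  | zero => simp
  | one => simp
  | more n _ ih =>
    rw [coeff_succ_S_natCast_add_two, ih, coeff_S_eq_zero_of_odd_or_lt (by omega), sub_zero]

theorem coeff_S_add_two_mul (i k : ℕ) :
    (S R ↑(i + 2 * k)).coeff i = (-1) ^ k * (i + k).choose i := by
  induction i generalizing k with
  | zero =>
    induction k with
    | zero => simp
    | succ k ih =>
      rw [show 0 + 2 * (k + 1) = 2 * k + 2 by ring, coeff_zero_S_natCast_add_two]
      simp_all [pow_succ]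
  | succ i ih =>
    induction k with
    | zero => simpa using coeff_S_self (R := R) (i + 1)
    | succ k ihk =>
      rw [show i + 1 + 2 * (k + 1) = (i + 2 * k + 1) + 2 by ring, coeff_succ_S_natCast_add_two,
        show i + 2 * k + 1 + 1 = i + 2 * (k + 1) by ring, ih,
        show i + 2 * k + 1 = i + 1 + 2 * k by ring, ihk,
        show i + 1 + (k + 1) = (i + k + 1) + 1 by ring, Nat.choose_succ_succ',
        show i + (k + 1) = i + k + 1 by ring, show i + 1 + k = i + k + 1 by ring]
      push_cast
      ring

theorem mk_S_mul_eq_one :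
    PowerSeries.mk (fun n : ℕ => S R n) *
      (1 - PowerSeries.C (X : R[X]) * PowerSeries.X + PowerSeries.X ^ 2) = 1 := by
  refine PowerSeries.ext fun n => ?_
  simp only [mul_add, mul_sub, mul_one, mul_left_comm _ (PowerSeries.C _), map_add, map_sub,
    PowerSeries.coeff_C_mul, PowerSeries.coeff_mul_X_pow', PowerSeries.coeff_mk,
    PowerSeries.coeff_one]
  rcases n with _ | _ | n
  · simp
  · simp
  · simp [add_assoc, S_add_two]

end Polynomial.Chebyshev

namespace PowerSeries

open Polynomial.Chebyshev
open scoped Polynomial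

theorem coeff_eq_of_mul_one_sub_X_sq {A : Type*} [Ring A] {F G : PowerSeries A}
    (h : F * (1 - X ^ 2) = G) (j : ℕ) :
    coeff j F = coeff j G + if 2 ≤ j then coeff (j - 2) F else 0 := by
  rw [← h, mul_sub, mul_one, map_sub, coeff_mul_X_pow', sub_add_cancel]

variable {R : Type*} [CommRing R]

theorem coeff_coeff_eq_zero_of_mul_one_sub_X_sq_eq_mk_S {F : PowerSeries R[X]}
    (hF : F * (1 - X ^ 2) = mk fun n : ℕ => S R n) {i j : ℕ} (h : Odd (i + j) ∨ j < i) :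
    (coeff j F).coeff i = 0 := by
  induction j using Nat.strong_induction_on with
  | _ j ih =>
  rw [coeff_eq_of_mul_one_sub_X_sq hF, coeff_mk, Polynomial.coeff_add,
    coeff_S_eq_zero_of_odd_or_lt h, zero_add]
  split_ifs with hj
  · refine ih (j - 2) (by omega) ?_
    simp only [Nat.odd_iff] at h ⊢
    omega
  · rfl

theorem coeff_coeff_add_two_mul_of_mul_one_sub_X_sq_eq_mk_S {F : PowerSeries R[X]}
    (hF : F * (1 - X ^ 2) = mk fun n : ℕ => S R n) (i k : ℕ) :
    (coeff (i + 2 * k) F).coeff i =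
      ∑ p ∈ Finset.range (k + 1), (-1) ^ p * ((i + p).choose i : R) := by
  induction k with
  | zero =>
    rw [Nat.mul_zero, add_zero, coeff_eq_of_mul_one_sub_X_sq hF, coeff_mk, Polynomial.coeff_add,
      coeff_S_self]
    split_ifs with hi
    · simp [coeff_coeff_eq_zero_of_mul_one_sub_X_sq_eq_mk_S hF
        (Or.inr (Nat.sub_lt_self two_pos hi))]
    · simp
  | succ k ih =>
    rw [coeff_eq_of_mul_one_sub_X_sq hF, if_pos (by omega), coeff_mk, Polynomial.coeff_add,
      Finset.sum_range_succ, show i + 2 * (k + 1) - 2 = i + 2 * k by omega, ih,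
      coeff_S_add_two_mul, add_comm]

end PowerSeries

/-- Write `c(x,χ) = 1/((1−χ²)(1−xχ+χ²)) = ∑_{i,j≥0} c_{ij} x^i χ^j`
(a power series in `χ` over `ℚ[x]`, characterized by `F · (1−χ²)(1−xχ+χ²) = 1`).
Then `c_{ij} = 0` if `j − i` is odd (equivalently `i + j` is odd) or `i > j`, and
`c_{i,i+2k} = ∑_{p=0}^{k} (−1)^p · binom(i+p, i)`. -/
theorem stmt_2 (F : PowerSeries (Polynomial ℚ))
    (hF : F * ((1 - PowerSeries.X ^ 2) *
      (1 - PowerSeries.C (R := Polynomial ℚ) Polynomial.X * PowerSeries.X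
        + PowerSeries.X ^ 2)) = 1) :
    (∀ i j : ℕ, (Odd (i + j) ∨ i > j) →
      (PowerSeries.coeff (R := Polynomial ℚ) j F).coeff i = 0) ∧
    (∀ i k : ℕ, (PowerSeries.coeff (R := Polynomial ℚ) (i + 2 * k) F).coeff i =
      ∑ p ∈ Finset.range (k + 1), (-1 : ℚ) ^ p * ((i + p).choose i : ℚ)) := by
  have hS : F * (1 - PowerSeries.X ^ 2) =
      PowerSeries.mk fun n : ℕ => Polynomial.Chebyshev.S ℚ n :=
    left_inv_eq_right_inv (by rw [mul_assoc, hF])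
      (by rw [mul_comm, Polynomial.Chebyshev.mk_S_mul_eq_one])
  exact ⟨fun _ _ h => PowerSeries.coeff_coeff_eq_zero_of_mul_one_sub_X_sq_eq_mk_S hS h,
    PowerSeries.coeff_coeff_add_two_mul_of_mul_one_sub_X_sq_eq_mk_S hS⟩
end
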